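/- arXiv:2204.10578 — 2 statements merged into one kernel-verified Lean document; each statement's English description precedes it below -/
import Mathlib

section
/- Let Ψ : [0,∞) → [0,∞) be nondecreasing and continuous at 0 with Ψ(0) = 0, and let Y : (0,∞) → ℝ be nonnegative, nondecreasing and differentiable with Y(ζ) ≤ Ψ(Y′(ζ)) for all ζ > 0. If Y(ζ₀) > 0 for some ζ₀ > 0, then Y′(ζ) → +∞ as ζ → +∞; in particular, for every τ₁ > 0 there exists ζ₁ ≥ ζ₀ such that Y′(ζ) ≥ τ₁ for all ζ ≥ ζ₁. -/
/-- Derivative blow-up step in the proof of the Ladyzhenskaya–Solonnikov growth lemma: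
if `Ψ` is nondecreasing on `[0,∞)`, continuous at `0` with `Ψ 0 = 0`, and `Y : (0,∞) → ℝ`
is nonnegative, nondecreasing, differentiable with `Y ζ ≤ Ψ (Y' ζ)` for all `ζ > 0`, and
`Y ζ₀ > 0` for some `ζ₀ > 0`, then `Y' ζ → +∞` as `ζ → +∞`; in particular for every
`τ₁ > 0` there is `ζ₁ ≥ ζ₀` such that `Y' ζ ≥ τ₁` for all `ζ ≥ ζ₁`. -/
theorem growth_lemma_deriv_blowup
    (Y Ψ : ℝ → ℝ) (ζ₀ : ℝ)
    (hΨ_mono : MonotoneOn Ψ (Set.Ici 0))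
    (hΨ_cont : ContinuousWithinAt Ψ (Set.Ici 0) 0)
    (hΨ_zero : Ψ 0 = 0)
    (hY_nonneg : ∀ ζ > (0:ℝ), 0 ≤ Y ζ)
    (hY_mono : ∀ ζ₁ ζ₂ : ℝ, 0 < ζ₁ → ζ₁ ≤ ζ₂ → Y ζ₁ ≤ Y ζ₂)
    (hY_diff : ∀ ζ > (0:ℝ), DifferentiableAt ℝ Y ζ)
    (hineq : ∀ ζ > (0:ℝ), Y ζ ≤ Ψ (deriv Y ζ))
    (hζ₀ : 0 < ζ₀) (hYζ₀ : 0 < Y ζ₀) :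
    Filter.Tendsto (deriv Y) Filter.atTop Filter.atTop ∧
      ∀ τ₁ > (0:ℝ), ∃ ζ₁ ≥ ζ₀, ∀ ζ ≥ ζ₁, τ₁ ≤ deriv Y ζ := by
  -- The derivative is nonnegative on (0,∞).
  have hderiv_nonneg : ∀ ζ > (0:ℝ), 0 ≤ deriv Y ζ := by
    intro ζ hζ
    have h := hasDerivAt_iff_tendsto_slope.mp ((hY_diff ζ hζ).hasDerivAt)
    have h' : Filter.Tendsto (slope Y ζ) (nhdsWithin ζ (Set.Ioi ζ)) (nhds (deriv Y ζ)) :=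
      h.mono_left (nhdsWithin_mono ζ (fun x hx => ne_of_gt hx))
    refine ge_of_tendsto h' ?_
    filter_upwards [self_mem_nhdsWithin] with x hx
    have hxζ : ζ < x := hx
    have h1 : 0 ≤ Y x - Y ζ := sub_nonneg.mpr (hY_mono ζ x hζ hxζ.le)
    rw [slope_def_field, div_eq_inv_mul]
    exact mul_nonneg (inv_nonneg.mpr (sub_nonneg.mpr hxζ.le)) h1
  -- Extract δ > 0 from continuity of Ψ at 0 with ε = Y ζ₀.
  obtain ⟨δ, hδ, hδΨ⟩ := Metric.continuousWithinAt_iff.mp hΨ_cont (Y ζ₀) hYζ₀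
  -- On [ζ₀, ∞), the derivative is ≥ δ/2.
  have hlow : ∀ ζ ≥ ζ₀, δ / 2 ≤ deriv Y ζ := by
    intro ζ hζ
    have hζpos : 0 < ζ := lt_of_lt_of_le hζ₀ hζ
    by_contra hlt
    push_neg at hlt
    have hd0 := hderiv_nonneg ζ hζpos
    have hmem : deriv Y ζ ∈ Set.Ici (0:ℝ) := hd0
    have hdist : dist (deriv Y ζ) 0 < δ := by
      rw [Real.dist_eq, sub_zero, abs_of_nonneg hd0]
      linarith
    have := hδΨ hmem hdist
    rw [hΨ_zero, Real.dist_eq, sub_zero] at this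
    have hΨlt : Ψ (deriv Y ζ) < Y ζ₀ := lt_of_abs_lt this
    have : Y ζ₀ ≤ Y ζ := hY_mono ζ₀ ζ hζ₀ hζ
    have := hineq ζ hζpos
    linarith
  -- Mean value inequality: Y grows at least linearly on [ζ₀, ∞).
  have hgrow : ∀ ζ ≥ ζ₀, δ / 2 * (ζ - ζ₀) ≤ Y ζ - Y ζ₀ := by
    intro ζ hζ
    have hcont : ContinuousOn Y (Set.Ici ζ₀) := fun x hx =>
      ((hY_diff x (lt_of_lt_of_le hζ₀ hx)).continuousAt).continuousWithinAt
    have hdiff : DifferentiableOn ℝ Y (interior (Set.Ici ζ₀)) := by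
      rw [interior_Ici]
      exact fun x hx => (hY_diff x (lt_trans hζ₀ hx)).differentiableWithinAt
    have hge : ∀ x ∈ interior (Set.Ici ζ₀), δ / 2 ≤ deriv Y x := by
      rw [interior_Ici]
      exact fun x hx => hlow x (le_of_lt hx)
    exact Convex.mul_sub_le_image_sub_of_le_deriv (convex_Ici ζ₀) hcont hdiff hge
      ζ₀ Set.self_mem_Ici ζ hζ hζ
  -- Main claim: the second conjunct.
  have main : ∀ τ₁ > (0:ℝ), ∃ ζ₁ ≥ ζ₀, ∀ ζ ≥ ζ₁, τ₁ ≤ deriv Y ζ := by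
    intro τ₁ hτ₁
    set M := Ψ τ₁ with hM
    refine ⟨max ζ₀ (ζ₀ + (M - Y ζ₀ + 1) / (δ / 2)), le_max_left _ _, ?_⟩
    intro ζ hζ
    have hζ0 : ζ₀ ≤ ζ := le_trans (le_max_left _ _) hζ
    have hζpos : 0 < ζ := lt_of_lt_of_le hζ₀ hζ0
    by_contra hlt
    push_neg at hlt
    -- From monotonicity of Ψ: Y ζ ≤ Ψ (deriv Y ζ) ≤ Ψ τ₁ = M
    have hd0 : 0 ≤ deriv Y ζ := hderiv_nonneg ζ hζpos
    have hΨle : Ψ (deriv Y ζ) ≤ M :=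
      hΨ_mono hd0 (le_of_lt hτ₁) (le_of_lt hlt)
    have hYleM : Y ζ ≤ M := le_trans (hineq ζ hζpos) hΨle
    -- But Y ζ > M by linear growth.
    have h1 : ζ₀ + (M - Y ζ₀ + 1) / (δ / 2) ≤ ζ := le_trans (le_max_right _ _) hζ
    have hδ2 : (0:ℝ) < δ / 2 := by linarith
    have h2 : M - Y ζ₀ + 1 ≤ δ / 2 * (ζ - ζ₀) := by
      rw [mul_comm]
      rw [← div_le_iff₀ hδ2]
      linarith
    have h3 := hgrow ζ hζ0
    linarith
  refine ⟨?_, main⟩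
  rw [Filter.tendsto_atTop_atTop]
  intro b
  obtain ⟨ζ₁, hζ₁, h⟩ := main (max b 1) (lt_of_lt_of_le one_pos (le_max_right _ _))
  exact ⟨ζ₁, fun ζ hζ => le_trans (le_max_left _ _) (h ζ hζ)⟩
end

section
/- Let α > 0 and Φ ∈ ℝ. Set A = 2(α+2)Φ/((α+4)π) and B = α/(α+2), and define the velocity field u : ℝ³ → ℝ³ by u(x₁,x₂,x₃) = (0, 0, A·(1 − B·(x₁²+x₂²))) and the pressure p : ℝ³ → ℝ by p(x₁,x₂,x₃) = −(8αΦ/((α+4)π))·x₃. Then: (i) div u = 0 everywhere on ℝ³; (ii) (u·∇)u + ∇p − Δu = 0 everywhere on ℝ³; (iii) at every point x with x₁² + x₂² = 1, writing n = (x₁, x₂, 0) for the unit outer normal of the cylinder, one has u(x)·n = 0 and 2(𝕊u(x)·n)_tan + α·u(x)_tan = 0; (iv) the flux through the cross section equals Φ, i.e. ∫_{{(x₁,x₂) : x₁²+x₂² < 1}} u₃(x₁,x₂,0) d(x₁,x₂) = Φ. Thus u is the Hagen–Poiseuille-type flow with flux Φ for the stationary Navier–Stokes equations with the Navier-slip boundary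 condition in the infinite pipe with unit-disk cross section. -/
/-! The velocity is a paraboloid in the cross-section variables pointing along the pipe axis, so
the convective term vanishes, `∇u₃ = -2AB (x₁, x₂, 0)` and `Δu₃ = -4AB`; the pressure gradient
`8αΦ/((α+4)π)` is exactly `4AB`. On the unit circle the tangential stress is `(0, 0, -AB)`, so the
slip condition reads `-2AB + αA(1 - B) = 0`, i.e. `B (α + 2) = α`. The flux is computed in polar
coordinates: `∫_disk A(1 - B|q|²) = 2π ∫₀¹ r A(1 - B r²) dr = πA(2 - B)/2`. -/

open MeasureTheory

/-- Partial derivative `∂_i f` of a scalar function on `ℝ³ = (Fin 3 → ℝ)`. -/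
noncomputable def pd3 (i : Fin 3) (f : (Fin 3 → ℝ) → ℝ) (x : Fin 3 → ℝ) : ℝ :=
  fderiv ℝ f x (Pi.single i 1)

/-- `k`-th component of `𝕊u · n`, where `𝕊u = (∇u + (∇u)ᵀ)/2` is the strain tensor. -/
noncomputable def strainDotN3 (u : (Fin 3 → ℝ) → Fin 3 → ℝ) (x n : Fin 3 → ℝ)
    (k : Fin 3) : ℝ :=
  ∑ j, ((pd3 k (fun y => u y j) x + pd3 j (fun y => u y k) x) / 2) * n j

open Set Real

theorem integral_unitDisk_radial (g : ℝ → ℝ) :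
    ∫ q in {q : ℝ × ℝ | q.1 ^ 2 + q.2 ^ 2 < 1}, g (q.1 ^ 2 + q.2 ^ 2)
      = 2 * π * ∫ r in (0:ℝ)..1, r * g (r ^ 2) := by
  have hpolar : ∀ p : ℝ × ℝ, (polarCoord.symm p).1 ^ 2 + (polarCoord.symm p).2 ^ 2 = p.1 ^ 2 := by
    rintro ⟨r, θ⟩
    simp only [polarCoord_symm_apply]
    linear_combination r ^ 2 * sin_sq_add_cos_sq θ
  rw [← integral_indicator (measurableSet_lt (by fun_prop) (by fun_prop)),
    ← integral_comp_polarCoord_symm]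
  calc ∫ p in polarCoord.target, p.1 • {q : ℝ × ℝ | q.1 ^ 2 + q.2 ^ 2 < 1}.indicator
          (fun q => g (q.1 ^ 2 + q.2 ^ 2)) (polarCoord.symm p)
      = ∫ p in Ioi (0:ℝ) ×ˢ Ioo (-π) π, (Iio 1).indicator (fun r => r * g (r ^ 2)) p.1 * 1 := by
        rw [polarCoord_target]
        refine setIntegral_congr_fun (measurableSet_Ioi.prod measurableSet_Ioo) fun p hp => ?_
        have hr : 0 < p.1 := hp.1
        simp only [indicator_apply, mem_ofPred_eq, mem_Iio, hpolar, smul_eq_mul, mul_one,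
          pow_lt_one_iff_of_nonneg hr.le two_ne_zero]
        split_ifs <;> simp
    _ = (∫ r in Ioi 0, (Iio 1).indicator (fun r => r * g (r ^ 2)) r) * ∫ _ in Ioo (-π) π, 1 :=
        setIntegral_prod_mul (μ := volume) (ν := volume) _ (fun _ => (1 : ℝ)) _ _
    _ = 2 * π * ∫ r in (0:ℝ)..1, r * g (r ^ 2) := by
        rw [setIntegral_indicator measurableSet_Iio, Ioi_inter_Iio,
          intervalIntegral.integral_of_le zero_le_one, integral_Ioc_eq_integral_Ioo,
          setIntegral_const, volume_real_Ioo_of_le (by linarith [pi_pos]), smul_eq_mul]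
        ring

theorem HasFDerivAt.pd3_eq {f : (Fin 3 → ℝ) → ℝ} {L : (Fin 3 → ℝ) →L[ℝ] ℝ} {x : Fin 3 → ℝ}
    (h : HasFDerivAt f L x) (i : Fin 3) : pd3 i f x = L (Pi.single i 1) := by
  rw [pd3, h.fderiv]

@[simp]
theorem pd3_const (i : Fin 3) (c : ℝ) : pd3 i (fun _ => c) = fun _ => 0 := by
  funext x
  simp [pd3]

@[simp]
theorem pd3_const_mul_apply (i j : Fin 3) (c : ℝ) (x : Fin 3 → ℝ) :
    pd3 i (fun y => c * y j) x = c * (Pi.single i 1 : Fin 3 → ℝ) j :=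
  ((ContinuousLinearMap.proj j).hasFDerivAt.const_mul c).pd3_eq i

section PoiseuilleFlow

variable (A B : ℝ)

def poiseuilleProfile (x : Fin 3 → ℝ) : ℝ :=
  A * (1 - B * (x 0 ^ 2 + x 1 ^ 2))

theorem pd3_poiseuilleProfile (i : Fin 3) :
    pd3 i (poiseuilleProfile A B) = fun x => -(2 * A * B) * ![x 0, x 1, 0] i := by
  funext x
  have hproj (j : Fin 3) :=
    (ContinuousLinearMap.proj (R := ℝ) (φ := fun _ : Fin 3 => ℝ) j).hasFDerivAt (x := x)
  have h : HasFDerivAt (poiseuilleProfile A B) _ x :=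
    ((((hproj 0).pow 2).add ((hproj 1).pow 2)).const_mul B |>.const_sub 1).const_mul A
  rw [h.pd3_eq]
  fin_cases i <;> simp
  all_goals ring

theorem laplacian_poiseuilleProfile (x : Fin 3 → ℝ) :
    ∑ i, pd3 i (pd3 i (poiseuilleProfile A B)) x = -(4 * A * B) := by
  simp only [Fin.sum_univ_three, pd3_poiseuilleProfile, Matrix.cons_val_zero, Matrix.cons_val_one,
    Matrix.cons_val_two, pd3_const_mul_apply]
  simp
  ring

def poiseuilleFlow (x : Fin 3 → ℝ) : Fin 3 → ℝ :=
  ![0, 0, poiseuilleProfile A B x]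

@[simp]
theorem poiseuilleFlow_apply_zero (x : Fin 3 → ℝ) : poiseuilleFlow A B x 0 = 0 := rfl

@[simp]
theorem poiseuilleFlow_apply_one (x : Fin 3 → ℝ) : poiseuilleFlow A B x 1 = 0 := rfl

@[simp]
theorem poiseuilleFlow_apply_two (x : Fin 3 → ℝ) :
    poiseuilleFlow A B x 2 = poiseuilleProfile A B x := rfl

theorem div_poiseuilleFlow (x : Fin 3 → ℝ) :
    ∑ i, pd3 i (fun y => poiseuilleFlow A B y i) x = 0 := by
  simp [Fin.sum_univ_three, pd3_poiseuilleProfile]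

theorem navierStokes_poiseuilleFlow (x : Fin 3 → ℝ) (j : Fin 3) :
    (∑ i, poiseuilleFlow A B x i * pd3 i (fun y => poiseuilleFlow A B y j) x)
        + pd3 j (fun y => -(4 * A * B) * y 2) x
        - ∑ i, pd3 i (pd3 i (fun y => poiseuilleFlow A B y j)) x = 0 := by
  rw [pd3_const_mul_apply]
  fin_cases j
  · simp
  · simp
  · simp only [Fin.reduceFinMk, poiseuilleFlow_apply_two, laplacian_poiseuilleProfile]
    simp [Fin.sum_univ_three, pd3_poiseuilleProfile]

theorem strainDotN3_poiseuilleFlow (x n : Fin 3 → ℝ) (k : Fin 3) :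
    strainDotN3 (poiseuilleFlow A B) x n k
      = -(A * B) * ![x 0 * n 2, x 1 * n 2, x 0 * n 0 + x 1 * n 1] k := by
  fin_cases k <;> simp [strainDotN3, Fin.sum_univ_three, pd3_poiseuilleProfile] <;> ring

theorem poiseuilleFlow_dot_cylinderNormal (x : Fin 3 → ℝ) :
    ∑ i, poiseuilleFlow A B x i * ![x 0, x 1, 0] i = 0 := by
  simp [Fin.sum_univ_three]

theorem navierSlip_poiseuilleFlow {α : ℝ} (hB : B * (α + 2) = α) {x : Fin 3 → ℝ}
    (hx : x 0 ^ 2 + x 1 ^ 2 = 1) (k : Fin 3) :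
    2 * (strainDotN3 (poiseuilleFlow A B) x ![x 0, x 1, 0] k
          - (∑ i, strainDotN3 (poiseuilleFlow A B) x ![x 0, x 1, 0] i * ![x 0, x 1, 0] i)
            * ![x 0, x 1, 0] k)
      + α * (poiseuilleFlow A B x k
          - (∑ i, poiseuilleFlow A B x i * ![x 0, x 1, 0] i) * ![x 0, x 1, 0] k) = 0 := by
  fin_cases k <;> simp [Fin.sum_univ_three, strainDotN3_poiseuilleFlow, poiseuilleProfile]
  linear_combination (-(2 * A * B) - α * A * B) * hx - A * hB

theorem integral_unitDisk_poiseuilleFlow :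
    ∫ q in {q : ℝ × ℝ | q.1 ^ 2 + q.2 ^ 2 < 1}, poiseuilleFlow A B ![q.1, q.2, 0] 2
      = π * A * (2 - B) / 2 := by
  have hpoly : (fun r : ℝ => r * (A * (1 - B * r ^ 2))) = fun r => A * r - A * B * r ^ 3 := by
    funext r; ring
  refine (integral_unitDisk_radial fun s => A * (1 - B * s)).trans ?_
  rw [hpoly, intervalIntegral.integral_sub (Continuous.intervalIntegrable (by fun_prop) _ _)
    (Continuous.intervalIntegrable (by fun_prop) _ _), intervalIntegral.integral_const_mul,
    intervalIntegral.integral_const_mul, integral_id, integral_pow]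
  ring

end PoiseuilleFlow

/-- The Hagen–Poiseuille-type flow with the Navier-slip boundary condition in the
infinite pipe with unit-disk cross section: with `A = 2(α+2)Φ/((α+4)π)`,
`B = α/(α+2)`, `u = (0,0,A(1 - B(x₁²+x₂²)))` and `p = -(8αΦ/((α+4)π)) x₃`, one has
(i) `div u = 0`; (ii) `(u·∇)u + ∇p - Δu = 0`; (iii) the Navier-slip boundary
conditions on the boundary `x₁²+x₂² = 1` with outer normal `n = (x₁,x₂,0)`;
(iv) the flux through the unit-disk cross section equals `Φ`. -/
theorem hagen_poiseuille_navier_slip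
    (α Φ A B : ℝ) (hα : 0 < α)
    (hA : A = 2 * (α + 2) * Φ / ((α + 4) * Real.pi))
    (hB : B = α / (α + 2))
    (u : (Fin 3 → ℝ) → Fin 3 → ℝ) (p : (Fin 3 → ℝ) → ℝ)
    (hu : ∀ x, u x = ![0, 0, A * (1 - B * ((x 0) ^ 2 + (x 1) ^ 2))])
    (hp : ∀ x, p x = -(8 * α * Φ / ((α + 4) * Real.pi)) * x 2) :
    -- (i) div u = 0
    (∀ x, ∑ i, pd3 i (fun y => u y i) x = 0) ∧
    -- (ii) (u·∇)u + ∇p - Δu = 0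
    (∀ x, ∀ j : Fin 3,
      (∑ i, u x i * pd3 i (fun y => u y j) x) + pd3 j p x
        - (∑ i, pd3 i (pd3 i (fun y => u y j)) x) = 0) ∧
    -- (iii) Navier-slip boundary condition on {x₁² + x₂² = 1} with n = (x₁,x₂,0)
    (∀ x : Fin 3 → ℝ, (x 0) ^ 2 + (x 1) ^ 2 = 1 →
      (∑ i, u x i * (![x 0, x 1, 0] : Fin 3 → ℝ) i) = 0 ∧
      ∀ k : Fin 3,
        2 * (strainDotN3 u x ![x 0, x 1, 0] k
              - (∑ i, strainDotN3 u x ![x 0, x 1, 0] i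
                  * (![x 0, x 1, 0] : Fin 3 → ℝ) i)
                * (![x 0, x 1, 0] : Fin 3 → ℝ) k)
          + α * (u x k
              - (∑ i, u x i * (![x 0, x 1, 0] : Fin 3 → ℝ) i)
                * (![x 0, x 1, 0] : Fin 3 → ℝ) k) = 0) ∧
    -- (iv) flux through the unit-disk cross section is Φ
    (∫ xh in {q : ℝ × ℝ | q.1 ^ 2 + q.2 ^ 2 < 1}, u ![xh.1, xh.2, 0] 2 = Φ) := by
  have hα2 : α + 2 ≠ 0 := by linarith
  have hα4 : α + 4 ≠ 0 := by linarith
  have hB' : B * (α + 2) = α := by rw [hB]; field_simp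
  obtain rfl : u = poiseuilleFlow A B := funext hu
  obtain rfl : p = fun x => -(4 * A * B) * x 2 := funext fun x => by
    rw [hp, hA, hB]; field_simp; ring
  refine ⟨div_poiseuilleFlow A B, navierStokes_poiseuilleFlow A B,
    fun x hx => ⟨poiseuilleFlow_dot_cylinderNormal A B x, navierSlip_poiseuilleFlow A B hB' hx⟩, ?_⟩
  rw [integral_unitDisk_poiseuilleFlow, hA, hB]
  field_simp
  ring
end
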